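/- arXiv:2511.13709 — 9 statements merged into one kernel-verified Lean document; each statement's English description precedes it below -/
import Mathlib

section
/- Let H₁* be the hypergraph on vertex set ℕ (positive integers) whose edges are the finite sets E ⊆ ℕ with |E| = min E. Then H₁* has no strongly maximal matching; i.e., for every matching M (pairwise disjoint family of edges) there exists a matching M' with |M' \ M| > |M \ M'| (both differences finite). -/
/-!
If `M` is finite, add an edge lying beyond every vertex of `M`.

If `M` is infinite, note that `min E = |E| ∈ E`, so the edges of `M` have pairwise distinct
minima. Pick `A ∈ M` with `|A| ≥ 3` and `B ∈ M` with `|B| > ∑ A`, and let `R` be the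
(finitely many) edges of `M` of size at most `|B|`. Their vertex set `P` has `∑_{E ∈ R} min E`
elements; trading the minimum `|B|` for the `|A| - 1 ≥ 2` non-minimal vertices of `A` gives
`|R| + 1` vertices of `P` with sum `< |P|`. Any `k` vertices of `P ⊆ ℕ₊` with sum at most `|P|`
can be replaced by the `k` smallest ones, which then serve as minima of `k` disjoint edges
inside `P`. Swapping `R` for these edges gains one edge.
-/

/-- An edge of the hypergraph `H₁*`: a finite nonempty set `E` of positive
integers with `|E| = min E`. -/
def IsEdgeH1 (E : Finset ℕ) : Prop := ∃ h : E.Nonempty, E.card = E.min' h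

/-- A matching of `H₁*`: a set of pairwise disjoint edges. -/
def IsMatchingH1 (M : Set (Finset ℕ)) : Prop :=
  (∀ E ∈ M, IsEdgeH1 E) ∧ M.Pairwise fun a b => Disjoint a b

namespace IsEdgeH1

variable {E : Finset ℕ}

lemma card_mem (hE : IsEdgeH1 E) : E.card ∈ E := by
  obtain ⟨hne, hc⟩ := hE
  exact hc ▸ E.min'_mem hne

lemma card_le (hE : IsEdgeH1 E) {x : ℕ} (hx : x ∈ E) : E.card ≤ x := by
  obtain ⟨hne, hc⟩ := hE
  exact hc ▸ E.min'_le x hx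

lemma zero_notMem (hE : IsEdgeH1 E) : 0 ∉ E := fun h0 => by
  have := hE.card_le h0
  have := hE.1.card_pos
  omega

end IsEdgeH1

lemma isEdgeH1_insert {a : ℕ} {A : Finset ℕ} (hA : ∀ x ∈ A, a < x) (hcard : A.card + 1 = a) :
    IsEdgeH1 (insert a A) := by
  have haA : a ∉ A := fun h => lt_irrefl a (hA a h)
  refine ⟨Finset.insert_nonempty a A, ?_⟩
  rw [Finset.card_insert_of_notMem haA, hcard]
  refine le_antisymm ?_ (Finset.min'_le _ _ (Finset.mem_insert_self a A))
  refine Finset.le_min' _ _ _ fun x hx => ?_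
  rcases Finset.mem_insert.mp hx with rfl | hx
  exacts [le_rfl, (hA x hx).le]

lemma isEdgeH1_Ico {u : ℕ} (hu : 0 < u) : IsEdgeH1 (Finset.Ico u (2 * u)) := by
  have hne : (Finset.Ico u (2 * u)).Nonempty := Finset.nonempty_Ico.mpr (by omega)
  refine ⟨hne, ?_⟩
  rw [Nat.card_Ico, show 2 * u - u = u by omega]
  refine le_antisymm (Finset.le_min' _ _ _ fun x hx => (Finset.mem_Ico.mp hx).1) ?_
  exact Finset.min'_le _ u (Finset.mem_Ico.mpr ⟨le_rfl, by omega⟩)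

lemma IsMatchingH1.insert {M : Set (Finset ℕ)} (hM : IsMatchingH1 M) {e : Finset ℕ}
    (he : IsEdgeH1 e) (hdisj : ∀ E ∈ M, Disjoint e E) : IsMatchingH1 (insert e M) := by
  refine ⟨Set.forall_mem_insert.mpr ⟨he, hM.1⟩, Set.pairwise_insert.mpr ⟨hM.2, ?_⟩⟩
  exact fun E hE _ => ⟨hdisj E hE, (hdisj E hE).symm⟩

lemma exists_initial_subset_sum_le {P S : Finset ℕ} (hSP : S ⊆ P) :
    ∃ L ⊆ P, L.card = S.card ∧ ∑ x ∈ L, x ≤ ∑ x ∈ S, x ∧ ∀ x ∈ L, ∀ y ∈ P \ L, x < y := by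
  obtain ⟨L, hLmem, hmin⟩ := Finset.exists_min_image (P.powersetCard S.card)
    (fun T => ∑ x ∈ T, x) ⟨S, Finset.mem_powersetCard.mpr ⟨hSP, rfl⟩⟩
  obtain ⟨hLP, hLcard⟩ := Finset.mem_powersetCard.mp hLmem
  refine ⟨L, hLP, hLcard, hmin S (Finset.mem_powersetCard.mpr ⟨hSP, rfl⟩), fun x hx y hy => ?_⟩
  obtain ⟨hyP, hyL⟩ := Finset.mem_sdiff.mp hy
  by_contra! hyx
  have hy_erase : y ∉ L.erase x := fun h => hyL (Finset.mem_of_mem_erase h)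
  have hswap : insert y (L.erase x) ∈ P.powersetCard S.card := by
    refine Finset.mem_powersetCard.mpr
      ⟨Finset.insert_subset hyP ((L.erase_subset x).trans hLP), ?_⟩
    rw [Finset.card_insert_of_notMem hy_erase, Finset.card_erase_of_mem hx, ← hLcard]
    exact Nat.sub_add_cancel (Finset.card_pos.mpr ⟨x, hx⟩)
  have hle := hmin _ hswap
  rw [Finset.sum_insert hy_erase, ← Finset.add_sum_erase L (fun x => x) hx] at hle
  have hne : y ≠ x := fun h => hyL (h ▸ hx)
  omega

lemma exists_matching_of_forall_lt {S T : Finset ℕ} (h0 : 0 ∉ S)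
    (hST : ∀ s ∈ S, ∀ t ∈ T, s < t) (hsum : ∑ s ∈ S, (s - 1) ≤ T.card) :
    ∃ N : Finset (Finset ℕ), N.card = S.card ∧ IsMatchingH1 ↑N ∧ ∀ E ∈ N, E ⊆ S ∪ T := by
  induction S using Finset.induction_on generalizing T with
  | empty => exact ⟨∅, rfl, ⟨by simp, by simp⟩, by simp⟩
  | insert a S haS ih =>
    rw [Finset.sum_insert haS] at hsum
    have ha0 : 0 < a := Nat.pos_of_ne_zero fun h => h0 (h ▸ Finset.mem_insert_self a S)
    have haT : ∀ t ∈ T, a < t := hST a (Finset.mem_insert_self a S)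
    obtain ⟨A, hAT, hAcard⟩ := Finset.exists_subset_card_eq (show a - 1 ≤ T.card by omega)
    have hedge : IsEdgeH1 (insert a A) := isEdgeH1_insert (fun x hx => haT x (hAT hx)) (by omega)
    obtain ⟨N, hNcard, hN, hNsub⟩ := ih (T := T \ A) (fun h => h0 (Finset.mem_insert_of_mem h))
      (fun s hs t ht => hST s (Finset.mem_insert_of_mem hs) t (Finset.mem_sdiff.mp ht).1)
      (by rw [Finset.card_sdiff_of_subset hAT]; omega)
    have hdisj : ∀ E ∈ N, Disjoint (insert a A) E := by
      refine fun E hE => Finset.disjoint_left.mpr fun x hx hxE => ?_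
      rcases Finset.mem_insert.mp hx, Finset.mem_union.mp (hNsub E hE hxE) with
        ⟨rfl | hxA, hxS | hxTA⟩
      · exact haS hxS
      · exact lt_irrefl x (haT x (Finset.mem_sdiff.mp hxTA).1)
      · exact lt_irrefl x (hST x (Finset.mem_insert_of_mem hxS) x (hAT hxA))
      · exact (Finset.mem_sdiff.mp hxTA).2 hxA
    have heN : insert a A ∉ N := fun h =>
      Finset.insert_ne_empty a A (Finset.disjoint_self_iff_empty _ |>.mp (hdisj _ h))
    refine ⟨insert (insert a A) N, ?_, by simpa using hN.insert hedge hdisj, ?_⟩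
    · rw [Finset.card_insert_of_notMem heN, hNcard, Finset.card_insert_of_notMem haS]
    · intro E hE
      rcases Finset.mem_insert.mp hE with rfl | hE
      · exact Finset.insert_subset (Finset.mem_union_left T (Finset.mem_insert_self a S))
          (hAT.trans Finset.subset_union_right)
      · exact (hNsub E hE).trans
          (Finset.union_subset_union (Finset.subset_insert a S) Finset.sdiff_subset)

lemma exists_matching_of_sum_le {P S : Finset ℕ} (hSP : S ⊆ P) (h0 : 0 ∉ P)
    (hsum : ∑ x ∈ S, x ≤ P.card) :
    ∃ N : Finset (Finset ℕ), N.card = S.card ∧ IsMatchingH1 ↑N ∧ ∀ E ∈ N, E ⊆ P := by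
  obtain ⟨L, hLP, hLcard, hLsum, hLinit⟩ := exists_initial_subset_sum_le hSP
  have hpos : ∀ x ∈ L, 1 ≤ x := fun x hx => Nat.pos_of_ne_zero fun h => h0 (h ▸ hLP hx)
  have hsub : ∑ x ∈ L, (x - 1) = ∑ x ∈ L, x - L.card := by
    rw [Finset.sum_tsub_distrib L hpos, Finset.card_eq_sum_ones]
  obtain ⟨N, hNcard, hN, hNsub⟩ := exists_matching_of_forall_lt (T := P \ L)
    (fun h => h0 (hLP h)) hLinit (by rw [Finset.card_sdiff_of_subset hLP]; omega)
  refine ⟨N, hNcard.trans hLcard, hN, fun E hE => ?_⟩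
  simpa [Finset.union_sdiff_of_subset hLP] using hNsub E hE

/-- `M` is not strongly maximal. -/
def IsImprovableH1 (M : Set (Finset ℕ)) : Prop :=
  ∃ M' : Set (Finset ℕ), IsMatchingH1 M' ∧ (M \ M').Finite ∧ (M' \ M).Finite ∧
    (M \ M').ncard < (M' \ M).ncard

namespace IsMatchingH1

variable {M : Set (Finset ℕ)}

lemma eq_of_card_mem (hM : IsMatchingH1 M) {E F : Finset ℕ} (hE : E ∈ M) (hF : F ∈ M)
    (h : F.card ∈ E) : E = F := by
  by_contra hne
  exact Finset.disjoint_left.mp (hM.2 hE hF hne) h (hM.1 F hF).card_mem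

lemma injOn_card (hM : IsMatchingH1 M) : Set.InjOn Finset.card M :=
  fun E hE _ hF h => hM.eq_of_card_mem hE hF (h ▸ (hM.1 E hE).card_mem)

lemma isImprovableH1_of_replace (hM : IsMatchingH1 M) {R N : Finset (Finset ℕ)}
    (hRM : ↑R ⊆ M) (hN : IsMatchingH1 ↑N) (hdisj : ∀ E ∈ M, E ∉ R → ∀ F ∈ N, Disjoint E F)
    (hcard : R.card < N.card) : IsImprovableH1 M := by
  have hNM : ∀ F ∈ N, F ∈ M → F ∈ R := fun F hF hFM => by
    by_contra hFR
    obtain ⟨x, hx⟩ := (hN.1 F hF).1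
    exact Finset.disjoint_left.mp (hdisj F hFM hFR F hF) hx hx
  have hold : M \ (M \ ↑R ∪ ↑N) = ↑(R \ N) := by
    ext E
    have hER : E ∈ R → E ∈ M := @hRM E
    simp only [Set.mem_sdiff, Set.mem_union, Finset.coe_sdiff, Finset.mem_coe]
    tauto
  have hnew : (M \ ↑R ∪ ↑N) \ M = ↑(N \ R) := by
    ext E
    have hER : E ∈ R → E ∈ M := @hRM E
    have hEN := hNM E
    simp only [Set.mem_sdiff, Set.mem_union, Finset.coe_sdiff, Finset.mem_coe]
    tauto
  refine ⟨M \ ↑R ∪ ↑N, ⟨?_, ?_⟩, ?_, ?_, ?_⟩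
  · rintro E (⟨hE, -⟩ | hE)
    exacts [hM.1 E hE, hN.1 E hE]
  · refine Set.pairwise_union.mpr ⟨hM.2.mono Set.sdiff_subset, hN.2, ?_⟩
    rintro E ⟨hEM, hER⟩ F hF -
    exact ⟨hdisj E hEM hER F hF, (hdisj E hEM hER F hF).symm⟩
  · simp only [hold, Finset.finite_toSet]
  · simp only [hnew, Finset.finite_toSet]
  · rw [hold, hnew, Set.ncard_coe_finset, Set.ncard_coe_finset]
    have := Finset.card_sdiff_add_card_inter R N
    have := Finset.card_sdiff_add_card_inter N R
    rw [Finset.inter_comm] at this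
    omega

lemma isImprovableH1_of_sum_le (hM : IsMatchingH1 M) {R : Finset (Finset ℕ)} (hRM : ↑R ⊆ M)
    {S : Finset ℕ} (hSR : S ⊆ R.biUnion id) (hsum : ∑ x ∈ S, x ≤ ∑ E ∈ R, E.card)
    (hcard : R.card < S.card) : IsImprovableH1 M := by
  have hP0 : 0 ∉ R.biUnion id := by
    simp only [Finset.mem_biUnion, id, not_exists, not_and]
    exact fun E hE => (hM.1 E (hRM hE)).zero_notMem
  obtain ⟨N, hNcard, hN, hNP⟩ := exists_matching_of_sum_le hSR hP0
    (by rwa [Finset.card_biUnion (t := id) (hM.2.mono hRM)])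
  refine hM.isImprovableH1_of_replace hRM hN (fun E hE hER F hF => ?_) (hNcard ▸ hcard)
  refine Finset.disjoint_of_subset_right (hNP F hF) ?_
  exact (Finset.disjoint_biUnion_right _ _ _).mpr fun G hG =>
    hM.2 hE (hRM hG) fun h => hER (h ▸ hG)

lemma isImprovableH1_of_finite (hM : IsMatchingH1 M) (hfin : M.Finite) : IsImprovableH1 M := by
  obtain ⟨b, hb⟩ := (hfin.biUnion fun E _ => E.finite_toSet).bddAbove
  have hedge := isEdgeH1_Ico (Nat.succ_pos b)
  refine hM.isImprovableH1_of_replace (R := ∅) (N := {Finset.Ico (b + 1) (2 * (b + 1))})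
    (by simp) ⟨by simpa using hedge, by simp⟩ (fun E hE _ F hF => ?_) (by simp)
  rw [Finset.mem_singleton.mp hF]
  refine Finset.disjoint_left.mpr fun x hxE hxF => ?_
  have := hb (Set.mem_biUnion hE hxE)
  have := (Finset.mem_Ico.mp hxF).1
  omega

lemma isImprovableH1_of_infinite (hM : IsMatchingH1 M) (hinf : M.Infinite) :
    IsImprovableH1 M := by
  classical
  have hcards : (Finset.card '' M).Infinite := hinf.image hM.injOn_card
  obtain ⟨_, ⟨A, hAM, rfl⟩, hA⟩ := hcards.exists_gt 2
  obtain ⟨_, ⟨B, hBM, rfl⟩, hB⟩ := hcards.exists_gt (∑ x ∈ A, x)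
  have hAmin : A.card ∈ A := (hM.1 A hAM).card_mem
  have hRfin : {E ∈ M | E.card ≤ B.card}.Finite :=
    Set.Finite.of_finite_image
      ((Set.finite_Iic B.card).subset (by rintro _ ⟨E, hE, rfl⟩; exact hE.2))
      (hM.injOn_card.mono (Set.sep_subset _ _))
  set R := hRfin.toFinset
  have hmemR {E : Finset ℕ} : E ∈ R ↔ E ∈ M ∧ E.card ≤ B.card := by simp [R]
  have hRM : ↑R ⊆ M := fun E hE => (hmemR.mp hE).1
  have hBR : B ∈ R := hmemR.mpr ⟨hBM, le_rfl⟩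
  have hAR : A ∈ R := hmemR.mpr ⟨hAM, (Finset.single_le_sum (by simp) hAmin).trans hB.le⟩
  have hinjR : Set.InjOn Finset.card ↑(R.erase B) :=
    hM.injOn_card.mono ((Finset.coe_subset.mpr (R.erase_subset B)).trans hRM)
  set D := A.erase A.card
  set C := (R.erase B).image Finset.card
  have hDC : Disjoint D C := by
    refine Finset.disjoint_left.mpr fun x hxD hxC => ?_
    obtain ⟨E, hE, rfl⟩ := Finset.mem_image.mp hxC
    have hEA := hM.eq_of_card_mem hAM (hRM (Finset.mem_of_mem_erase hE))
      (Finset.mem_of_mem_erase hxD)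
    exact Finset.ne_of_mem_erase hxD (hEA ▸ rfl)
  refine hM.isImprovableH1_of_sum_le hRM (S := D ∪ C) ?_ ?_ ?_
  · refine Finset.union_subset
      ((A.erase_subset _).trans (Finset.subset_biUnion_of_mem id hAR)) ?_
    intro x hx
    obtain ⟨E, hE, rfl⟩ := Finset.mem_image.mp hx
    have hER := Finset.mem_of_mem_erase hE
    exact Finset.mem_biUnion.mpr ⟨E, hER, (hM.1 E (hRM hER)).card_mem⟩
  · have hDA : ∑ x ∈ D, x ≤ ∑ x ∈ A, x := Finset.sum_le_sum_of_subset (A.erase_subset _)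
    rw [Finset.sum_union hDC, Finset.sum_image hinjR, ← Finset.add_sum_erase R _ hBR]
    omega
  · rw [Finset.card_union_of_disjoint hDC, Finset.card_image_of_injOn hinjR,
      Finset.card_erase_of_mem hAmin, Finset.card_erase_of_mem hBR]
    have := Finset.card_pos.mpr ⟨B, hBR⟩
    omega

end IsMatchingH1

/-- `H₁*` has no strongly maximal matching. -/
theorem stmt_0 (M : Set (Finset ℕ)) (hM : IsMatchingH1 M) :
    ∃ M' : Set (Finset ℕ), IsMatchingH1 M' ∧ (M \ M').Finite ∧ (M' \ M).Finite ∧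
      (M \ M').ncard < (M' \ M).ncard :=
  M.finite_or_infinite.elim hM.isImprovableH1_of_finite hM.isImprovableH1_of_infinite
end

section
/- In the hypergraph H₁* on ℕ₊ with edges {E finite : |E| = min E}, every matching is finite-or-infinite, and for any infinite matching M there exist three pairwise disjoint edges F₁, F₂, F₃ all contained in the union of just two edges E₁, E₂ of M. Concretely: if E₁ = {v₁ < v₂ < … < v_t} is an edge and E₂ is an edge with min E₂ ≥ v₂ + v₃, and E₁ ∩ E₂ = ∅, then there exist pairwise disjoint sets F₁, F₂, F₃ ⊆ E₁ ∪ E₂ with |F_i| = min F_i = v_i for i = 1, 2, 3. -/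
/-!
Take `F₁ = (E₁ \ {v₂, v₃}) ∪ A`, `F₂ = {v₂} ∪ B`, `F₃ = {v₃} ∪ C` with `A`, `B`, `C`
disjoint subsets of `E₂` of sizes `2`, `v₂ - 1`, `v₃ - 1`; they exist because
`|E₂| = min E₂ ≥ v₂ + v₃`. Every element of `E₂` exceeds `v₃`, so the padding does not
change the minima `v₁`, `v₂`, `v₃`, and `|F₁| = |E₁| = min E₁ = v₁`.
-/

open Finset

namespace Finset

variable {α : Type*} [DecidableEq α]

theorem exists_disjoint_subsets_card_eq {s : Finset α} {a b : ℕ} (h : a + b ≤ #s) :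
    ∃ A B, A ⊆ s ∧ B ⊆ s ∧ Disjoint A B ∧ #A = a ∧ #B = b := by
  obtain ⟨A, hA, hAcard⟩ := exists_subset_card_eq (s := s) (n := a) (by omega)
  obtain ⟨B, hB, hBcard⟩ := exists_subset_card_eq (s := s \ A) (n := b)
    (by rw [card_sdiff_of_subset hA]; omega)
  exact ⟨A, B, hA, hB.trans sdiff_subset, disjoint_of_subset_right hB disjoint_sdiff,
    hAcard, hBcard⟩

theorem exists_three_disjoint_subsets_card_eq {s : Finset α} {a b c : ℕ}
    (h : a + b + c ≤ #s) :
    ∃ A B C, A ⊆ s ∧ B ⊆ s ∧ C ⊆ s ∧ Disjoint A B ∧ Disjoint A C ∧ Disjoint B C ∧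
      #A = a ∧ #B = b ∧ #C = c := by
  obtain ⟨D, C, hD, hC, hDC, hDcard, hCcard⟩ := exists_disjoint_subsets_card_eq h
  obtain ⟨A, B, hA, hB, hAB, hAcard, hBcard⟩ :=
    exists_disjoint_subsets_card_eq (s := D) (a := a) (b := b) hDcard.ge
  exact ⟨A, B, C, hA.trans hD, hB.trans hD, hC, hAB, hDC.mono_left hA, hDC.mono_left hB,
    hAcard, hBcard, hCcard⟩

end Finset

theorem exists_card_eq_min'_eq {F : Finset ℕ} {v : ℕ} (hv : IsLeast (F : Set ℕ) v)
    (hcard : #F = v) : ∃ h : F.Nonempty, #F = v ∧ F.min' h = v :=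
  ⟨⟨v, hv.1⟩, hcard, (F.isLeast_min' _).unique hv⟩

theorem exists_card_insert_eq_min'_eq {B : Finset ℕ} {v : ℕ} (h : ∀ w ∈ B, v < w)
    (hcard : #B + 1 = v) :
    ∃ h : (insert v B).Nonempty, #(insert v B) = v ∧ (insert v B).min' h = v := by
  refine exists_card_eq_min'_eq ⟨by simp, ?_⟩ ?_
  · rw [coe_insert]
    rintro w (rfl | hw)
    exacts [le_rfl, (h w hw).le]
  · rwa [card_insert_of_notMem fun hv => (h v hv).false]

theorem exists_card_sdiff_union_eq_min'_eq {E T A : Finset ℕ} {v : ℕ}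
    (hv : IsLeast (E : Set ℕ) v) (hcard : #E = v) (hT : T ⊆ E) (hvT : v ∉ T)
    (hEA : Disjoint E A) (hA : ∀ w ∈ A, v < w) (hTA : #A = #T) :
    ∃ h : (E \ T ∪ A).Nonempty, #(E \ T ∪ A) = v ∧ (E \ T ∪ A).min' h = v := by
  refine exists_card_eq_min'_eq ⟨by simp [hv.1, hvT], ?_⟩ ?_
  · rw [coe_union, coe_sdiff]
    rintro w (hw | hw)
    exacts [hv.2 hw.1, (hA w hw).le]
  · rw [card_union_of_disjoint (hEA.mono_left sdiff_subset), hTA,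
      card_sdiff_add_card_eq_card hT, hcard]

namespace IsEdgeH1

theorem card_eq {E : Finset ℕ} {v : ℕ} (hE : IsEdgeH1 E) (hv : IsLeast (E : Set ℕ) v) :
    #E = v := by
  obtain ⟨hne, hcard⟩ := hE
  rw [hcard, (E.isLeast_min' hne).unique hv]

theorem le_card {E : Finset ℕ} {m : ℕ} (hE : IsEdgeH1 E) (hm : ∀ w ∈ E, m ≤ w) : m ≤ #E := by
  obtain ⟨hne, hcard⟩ := hE
  exact hcard ▸ hm _ (E.min'_mem hne)

end IsEdgeH1

theorem stmt_1_general (E₁ E₂ : Finset ℕ) (v₁ v₂ v₃ : ℕ)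
    (hE₁ : IsEdgeH1 E₁) (hE₂ : IsEdgeH1 E₂)
    (hv₁ : v₁ ∈ E₁) (hv₁min : ∀ w ∈ E₁, v₁ ≤ w)
    (hv₂ : v₂ ∈ E₁) (h12 : v₁ < v₂)
    (hv₃ : v₃ ∈ E₁) (h23 : v₂ < v₃)
    (hE₂big : ∀ w ∈ E₂, v₂ + v₃ ≤ w)
    (hdisj : Disjoint E₁ E₂) :
    ∃ F₁ F₂ F₃ : Finset ℕ,
      F₁ ⊆ E₁ ∪ E₂ ∧ F₂ ⊆ E₁ ∪ E₂ ∧ F₃ ⊆ E₁ ∪ E₂ ∧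
      Disjoint F₁ F₂ ∧ Disjoint F₁ F₃ ∧ Disjoint F₂ F₃ ∧
      (∃ h₁ : F₁.Nonempty, F₁.card = v₁ ∧ F₁.min' h₁ = v₁) ∧
      (∃ h₂ : F₂.Nonempty, F₂.card = v₂ ∧ F₂.min' h₂ = v₂) ∧
      (∃ h₃ : F₃.Nonempty, F₃.card = v₃ ∧ F₃.min' h₃ = v₃) := by
  have hleast₁ : IsLeast (E₁ : Set ℕ) v₁ := ⟨hv₁, fun w hw => hv₁min w hw⟩
  have hcard₁ : #E₁ = v₁ := hE₁.card_eq hleast₁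
  have hcard₂ : v₂ + v₃ ≤ #E₂ := hE₂.le_card hE₂big
  have hlarge : ∀ w ∈ E₂, v₃ < w := fun w hw => by have := hE₂big w hw; omega
  obtain ⟨A, B, C, hA, hB, hC, hAB, hAC, hBC, hAcard, hBcard, hCcard⟩ :=
    exists_three_disjoint_subsets_card_eq (s := E₂) (a := 2) (b := v₂ - 1) (c := v₃ - 1)
      (by omega)
  have hv₂₃ : ({v₂, v₃} : Finset ℕ) ⊆ E₁ := by simp [insert_subset_iff, hv₂, hv₃]
  have hv₂E₂ : v₂ ∉ E₂ := fun h => by have := hlarge v₂ h; omega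
  have hv₃E₂ : v₃ ∉ E₂ := fun h => (hlarge v₃ h).false
  refine ⟨E₁ \ {v₂, v₃} ∪ A, insert v₂ B, insert v₃ C,
    union_subset_union sdiff_subset hA,
    insert_subset (mem_union_left _ hv₂) (hB.trans subset_union_right),
    insert_subset (mem_union_left _ hv₃) (hC.trans subset_union_right), ?_, ?_, ?_,
    exists_card_sdiff_union_eq_min'_eq hleast₁ hcard₁ hv₂₃
      (by simp [h12.ne, (h12.trans h23).ne]) (hdisj.mono_right hA)
      (fun w hw => by have := hlarge w (hA hw); omega) (hAcard.trans (card_pair h23.ne).symm),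
    exists_card_insert_eq_min'_eq (fun w hw => by have := hlarge w (hB hw); omega)
      (by omega),
    exists_card_insert_eq_min'_eq (fun w hw => hlarge w (hC hw)) (by omega)⟩
  · rw [disjoint_insert_right, disjoint_union_left]
    exact ⟨by simpa using fun h => hv₂E₂ (hA h), hdisj.mono sdiff_subset hB, hAB⟩
  · rw [disjoint_insert_right, disjoint_union_left]
    exact ⟨by simpa using fun h => hv₃E₂ (hA h), hdisj.mono sdiff_subset hC, hAC⟩
  · rw [disjoint_insert_right, disjoint_insert_left]
    exact ⟨by simpa [h23.ne'] using fun h => hv₃E₂ (hB h), fun h => hv₂E₂ (hC h), hBC⟩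

/-- If `E₁` is an edge of `H₁*` with three smallest elements `v₁ < v₂ < v₃`, and `E₂`
is an edge disjoint from `E₁` with `min E₂ ≥ v₂ + v₃`, then there are three pairwise
disjoint sets `F₁, F₂, F₃ ⊆ E₁ ∪ E₂` with `|Fᵢ| = min Fᵢ = vᵢ`. -/
theorem stmt_1 (E₁ E₂ : Finset ℕ) (v₁ v₂ v₃ : ℕ)
    (hE₁ : IsEdgeH1 E₁) (hE₂ : IsEdgeH1 E₂)
    (hv₁ : v₁ ∈ E₁) (hv₁min : ∀ w ∈ E₁, v₁ ≤ w)
    (hv₂ : v₂ ∈ E₁) (h12 : v₁ < v₂) (hv₂min : ∀ w ∈ E₁, v₁ < w → v₂ ≤ w)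
    (hv₃ : v₃ ∈ E₁) (h23 : v₂ < v₃) (hv₃min : ∀ w ∈ E₁, v₂ < w → v₃ ≤ w)
    (hE₂big : ∀ w ∈ E₂, v₂ + v₃ ≤ w)
    (hdisj : Disjoint E₁ E₂) :
    ∃ F₁ F₂ F₃ : Finset ℕ,
      F₁ ⊆ E₁ ∪ E₂ ∧ F₂ ⊆ E₁ ∪ E₂ ∧ F₃ ⊆ E₁ ∪ E₂ ∧
      Disjoint F₁ F₂ ∧ Disjoint F₁ F₃ ∧ Disjoint F₂ F₃ ∧
      (∃ h₁ : F₁.Nonempty, F₁.card = v₁ ∧ F₁.min' h₁ = v₁) ∧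
      (∃ h₂ : F₂.Nonempty, F₂.card = v₂ ∧ F₂.min' h₂ = v₂) ∧
      (∃ h₃ : F₃.Nonempty, F₃.card = v₃ ∧ F₃.min' h₃ = v₃) :=
  stmt_1_general E₁ E₂ v₁ v₂ v₃ hE₁ hE₂ hv₁ hv₁min hv₂ h12 hv₃ h23 hE₂big hdisj
end

section
/- The hypergraph H₁* on ℕ₊ with edges the finite sets E with |E| = min E has no strongly minimal vertex-cover: for any vertex-cover A ⊆ ℕ₊, there exists a vertex-cover A' such that |A \ A'| > |A' \ A|. -/
/-- A vertex-cover of `H₁*`: a set of positive integers meeting every edge. -/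
def IsVertexCoverH1 (A : Set ℕ) : Prop :=
  A ⊆ {n | 0 < n} ∧ ∀ E : Finset ℕ, IsEdgeH1 E → ∃ v ∈ E, v ∈ A

/-!
Call the positive integers missing from a vertex-cover `A` its gaps. If `m` is a gap, every
`m - 1` integers above `m` together with `m` form an edge, so fewer than `m - 1` gaps lie above
`m`: the gaps are finite. If there are none, dropping `2` from `A` still leaves a cover, since the
only edges through `2` are pairs. Otherwise let `a` be the least gap and `N` bound the gaps. Then
filling `a` and opening the two new gaps `N + 1`, `N + 2` gives a cover: an edge missing it would
avoid `a`, hence have minimum and size above `a`, and after discarding `N + 1`, `N + 2` it would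
still contain `a - 1` gaps above `a`.
-/

lemma IsEdgeH1.pos {E : Finset ℕ} (hE : IsEdgeH1 E) {x : ℕ} (hx : x ∈ E) : 0 < x := by
  obtain ⟨hne, hcard⟩ := hE
  have := E.min'_le x hx
  have := hne.card_pos
  omega

lemma isEdgeH1_insert_s2 {m : ℕ} (hm : 0 < m) {s : Finset ℕ} (hs : ∀ x ∈ s, m < x)
    (hcard : s.card = m - 1) : IsEdgeH1 (insert m s) := by
  have hms : m ∉ s := fun h => (hs m h).false
  have hmin : (insert m s).min' (Finset.insert_nonempty m s) = m :=
    le_antisymm (Finset.min'_le _ m (Finset.mem_insert_self m s))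
      (Finset.le_min' _ _ _ fun y hy =>
        (Finset.mem_insert.mp hy).elim ge_of_eq fun h => (hs y h).le)
  refine ⟨Finset.insert_nonempty m s, ?_⟩
  rw [hmin, Finset.card_insert_of_notMem hms, hcard]
  omega

namespace Set

variable {α : Type*} {s t : Set α} {a : α}

lemma sdiff_insert_sdiff_of_subset (ht : t ⊆ s) : s \ (insert a s \ t) = t := by
  ext x
  simp only [mem_sdiff, mem_insert_iff]
  exact ⟨fun h => of_not_not fun hx => h.2 ⟨Or.inr h.1, hx⟩,
    fun hx => ⟨ht hx, fun h => h.2 hx⟩⟩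

lemma insert_sdiff_sdiff_eq_singleton (hs : a ∉ s) (ht : a ∉ t) :
    (insert a s \ t) \ s = {a} := by
  rw [sdiff_right_comm, insert_sdiff_eq_singleton hs,
    sdiff_eq_left.mpr (disjoint_singleton_left.mpr ht)]

end Set

namespace IsVertexCoverH1

variable {A : Set ℕ}

lemma exists_mem_of_le_card (hA : IsVertexCoverH1 A) {m : ℕ} (hm : 0 < m) (hmA : m ∉ A)
    {S : Finset ℕ} (hS : ∀ x ∈ S, m < x) (hcard : m - 1 ≤ S.card) :
    ∃ v ∈ S, v ∈ A := by
  obtain ⟨t, hts, htcard⟩ := Finset.exists_subset_card_eq hcard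
  obtain ⟨v, hv, hvA⟩ := hA.2 _ (isEdgeH1_insert_s2 hm (fun x hx => hS x (hts hx)) htcard)
  rcases Finset.mem_insert.mp hv with rfl | hvt
  · exact absurd hvA hmA
  · exact ⟨v, hts hvt, hvA⟩

lemma finite_gaps (hA : IsVertexCoverH1 A) : {n | 0 < n ∧ n ∉ A}.Finite := by
  by_contra hinf
  obtain ⟨m, hm, hmA⟩ := Set.not_finite.mp hinf |>.nonempty
  obtain ⟨t, hts, htcard⟩ :=
    ((Set.not_finite.mp hinf).sdiff (Set.finite_Iic m)).exists_subset_card_eq (m - 1)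
  have hgt : ∀ x ∈ t, m < x := fun x hx => not_le.mp (hts hx).2
  obtain ⟨v, hv, hvA⟩ := hA.exists_mem_of_le_card hm hmA hgt htcard.ge
  exact (hts hv).1.2 hvA

lemma sdiff_singleton_two (hA : IsVertexCoverH1 A) (hall : ∀ n, 0 < n → n ∈ A) :
    IsVertexCoverH1 (A \ {2}) := by
  refine ⟨fun x hx => hA.1 hx.1, fun E hE => ?_⟩
  obtain ⟨hne, hcard⟩ := hE
  by_cases h2 : E.min' hne = 2
  · obtain ⟨x, hx, hx2⟩ := Finset.exists_mem_ne (s := E) (by omega) 2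
    exact ⟨x, hx, hall x (IsEdgeH1.pos ⟨hne, hcard⟩ hx), hx2⟩
  · exact ⟨_, E.min'_mem hne, hall _ (IsEdgeH1.pos ⟨hne, hcard⟩ (E.min'_mem hne)), h2⟩

lemma insert_sdiff_pair (hA : IsVertexCoverH1 A) {a b c : ℕ} (ha : 0 < a) (haA : a ∉ A)
    (hmin : ∀ n, 0 < n → n ∉ A → a ≤ n) (hab : a < b) (hac : a < c) :
    IsVertexCoverH1 (insert a A \ {b, c}) := by
  refine ⟨fun x hx => (Set.mem_insert_iff.mp hx.1).elim (· ▸ ha) (hA.1 ·), fun E hE => ?_⟩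
  by_contra! hmiss
  have hmissA : ∀ x ∈ E, x ∈ A → x = b ∨ x = c := fun x hx hxA => by
    by_contra h
    exact hmiss x hx ⟨Set.mem_insert_of_mem a hxA, by simpa using h⟩
  have haE : a ∉ E := fun h => hmiss a h ⟨Set.mem_insert a A, by
    simp only [Set.mem_insert_iff, Set.mem_singleton_iff]; omega⟩
  have hgt : ∀ x ∈ E, a < x := fun x hx => by
    by_cases hxA : x ∈ A
    · rcases hmissA x hx hxA with rfl | rfl <;> assumption
    · exact lt_of_le_of_ne (hmin x (hE.pos hx) hxA) fun h => haE (h ▸ hx)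
  obtain ⟨hne, hcard⟩ := hE
  have hcardE : a + 1 ≤ E.card := hcard ▸ hgt _ (E.min'_mem hne)
  have hcardS : a - 1 ≤ (E \ {b, c}).card := by
    have := Finset.card_le_card_sdiff_add_card (s := E) (t := {b, c})
    have := Finset.card_le_two (a := b) (b := c)
    omega
  obtain ⟨v, hv, hvA⟩ := hA.exists_mem_of_le_card ha haA
    (fun x hx => hgt x (Finset.mem_sdiff.mp hx).1) hcardS
  rw [Finset.mem_sdiff, Finset.mem_insert, Finset.mem_singleton] at hv
  exact hv.2 (hmissA v hv.1 hvA)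

end IsVertexCoverH1

/-- `H₁*` has no strongly minimal vertex-cover. -/
theorem stmt_2 (A : Set ℕ) (hA : IsVertexCoverH1 A) :
    ∃ A' : Set ℕ, IsVertexCoverH1 A' ∧ (A \ A').Finite ∧ (A' \ A).Finite ∧
      (A' \ A).ncard < (A \ A').ncard := by
  by_cases hall : ∀ n, 0 < n → n ∈ A
  · refine ⟨A \ {2}, hA.sdiff_singleton_two hall, ?_⟩
    rw [Set.sdiff_sdiff_cancel_left (Set.singleton_subset_iff.mpr (hall 2 two_pos)),
      Set.sdiff_eq_empty.mpr Set.sdiff_subset]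
    simp
  push Not at hall
  classical
  obtain ⟨N, hN⟩ := hA.finite_gaps.bddAbove
  obtain ⟨ha, haA⟩ := Nat.find_spec hall
  set a := Nat.find hall
  have haN : a ≤ N := hN ⟨ha, haA⟩
  have hA_of_gt : ∀ n, N < n → n ∈ A := fun n hn =>
    of_not_not fun hnA => (hN ⟨by omega, hnA⟩).not_gt hn
  have hpair : ({N + 1, N + 2} : Set ℕ) ⊆ A := by
    simp [Set.insert_subset_iff, hA_of_gt]
  refine ⟨insert a A \ {N + 1, N + 2},
    hA.insert_sdiff_pair ha haA (fun n hn hnA => Nat.find_min' hall ⟨hn, hnA⟩)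
      (by omega) (by omega), ?_⟩
  have haN2 : a ∉ ({N + 1, N + 2} : Set ℕ) := by
    simp only [Set.mem_insert_iff, Set.mem_singleton_iff]; omega
  rw [Set.sdiff_insert_sdiff_of_subset hpair, Set.insert_sdiff_sdiff_eq_singleton haA haN2,
    Set.ncard_singleton, Set.ncard_pair (by omega)]
  exact ⟨Set.toFinite _, Set.toFinite _, one_lt_two⟩
end

section
/- Every vertex-cover of the hypergraph H₁* on ℕ₊ (edges: finite sets E with |E| = min E) is cofinite in ℕ₊. -/
/-! An infinite set `B` contains an edge with minimum `k` for each positive `k ∈ B`: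
add to `k` any `k - 1` elements of `B` above `k`. A vertex-cover meets that edge, so
its complement in the positive integers cannot be infinite. -/

theorem Set.Infinite.exists_isEdgeH1_subset {B : Set ℕ} (hB : B.Infinite) {k : ℕ}
    (hkB : k ∈ B) (hk : 0 < k) : ∃ E : Finset ℕ, IsEdgeH1 E ∧ ↑E ⊆ B := by
  obtain ⟨S, hSB, hScard⟩ := (hB.sdiff (Set.finite_Iic k)).exists_subset_card_eq (k - 1)
  have hkS : k ∉ S := fun h => (hSB h).2 (Set.mem_Iic.2 le_rfl)
  have hmin : (insert k S).min' (Finset.insert_nonempty k S) = k := by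
    refine (Finset.min'_eq_iff _ _ _).2 ⟨Finset.mem_insert_self k S, fun b hb => ?_⟩
    rcases Finset.mem_insert.1 hb with rfl | hbS
    · exact le_rfl
    · exact (not_le.1 (mt Set.mem_Iic.2 (hSB hbS).2)).le
  refine ⟨insert k S, ⟨Finset.insert_nonempty k S, ?_⟩, ?_⟩
  · rw [hmin, Finset.card_insert_of_notMem hkS, hScard]
    omega
  · rw [Finset.coe_insert]
    exact Set.insert_subset hkB fun b hb => (hSB hb).1

/-- Every vertex-cover of `H₁*` is cofinite in the positive integers. -/
theorem stmt_3 (A : Set ℕ) (hA : IsVertexCoverH1 A) :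
    ({n : ℕ | 0 < n} \ A).Finite := by
  by_contra hinf
  obtain ⟨k, hk⟩ := Set.Infinite.nonempty hinf
  obtain ⟨E, hE, hEB⟩ := Set.Infinite.exists_isEdgeH1_subset hinf hk hk.1
  obtain ⟨v, hvE, hvA⟩ := hA.2 E hE
  exact (hEB hvE).2 hvA
end

section
/- Let H₂* be the hypergraph on vertex set ℕ whose edges are all finite nonempty subsets of ℕ. Then H₂* has no strongly minimal edge-cover: for every edge-cover C there is an edge-cover C' with |C \ C'| > |C' \ C|. -/
/-!
An edge-cover `C` of `H₂*` consists of finite sets covering `ℕ`, so it is infinite and contains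
two distinct edges `E ≠ F`. Replacing them by the single edge `E ∪ F` gives again an edge-cover.
This adds at most the edge `E ∪ F` and removes `E` and `F` unless one of them is `E ∪ F`; but in
that case `E ∪ F` was already in `C`, so nothing is added while the other edge is removed.
-/

/-- An edge-cover of the hypergraph `H₂*` on `ℕ` whose edges are all finite nonempty
subsets of `ℕ`: a family of finite nonempty sets whose union is all of `ℕ`. -/
def IsEdgeCoverH2 (C : Set (Finset ℕ)) : Prop :=
  (∀ E ∈ C, E.Nonempty) ∧ ∀ n : ℕ, ∃ E ∈ C, n ∈ E

namespace Set

variable {β : Type*} (C : Set β) (a b d : β)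

theorem diff_insert_diff_pair_subset : C \ insert d (C \ {a, b}) ⊆ {a, b} := by
  intro x
  simp only [mem_sdiff, mem_insert_iff, mem_singleton_iff]
  tauto

theorem insert_diff_pair_diff_subset : insert d (C \ {a, b}) \ C ⊆ {d} := by
  intro x
  simp only [mem_sdiff, mem_insert_iff, mem_singleton_iff]
  tauto

theorem ncard_insert_diff_pair_diff_lt {C : Set β} {a b : β} (ha : a ∈ C) (hb : b ∈ C)
    (hab : a ≠ b) (d : β) :
    (insert d (C \ {a, b}) \ C).ncard < (C \ insert d (C \ {a, b})).ncard := by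
  have hfin : (C \ insert d (C \ {a, b})).Finite :=
    (toFinite {a, b}).subset (diff_insert_diff_pair_subset C a b d)
  have removed {x} (hx : x ∈ C) (hxab : x = a ∨ x = b) (hxd : x ≠ d) :
      x ∈ C \ insert d (C \ {a, b}) := by
    simp only [mem_sdiff, mem_insert_iff, mem_singleton_iff]
    tauto
  by_cases hd : d ∈ C
  · have hadded : insert d (C \ {a, b}) \ C = ∅ :=
      subset_empty_iff.mp fun x hx ↦ hx.2 (insert_diff_pair_diff_subset C a b d hx ▸ hd)
    rw [hadded, ncard_empty, ncard_pos hfin]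
    by_cases had : a = d
    · exact ⟨b, removed hb (Or.inr rfl) (had ▸ hab.symm)⟩
    · exact ⟨a, removed ha (Or.inl rfl) had⟩
  · calc (insert d (C \ {a, b}) \ C).ncard
        ≤ ({d} : Set β).ncard := ncard_le_ncard (insert_diff_pair_diff_subset C a b d)
      _ < ({a, b} : Set β).ncard := by rw [ncard_singleton, ncard_pair hab]; omega
      _ ≤ (C \ insert d (C \ {a, b})).ncard := by
        refine ncard_le_ncard (pair_subset ?_ ?_) hfin
        · exact removed ha (Or.inl rfl) (ne_of_mem_of_not_mem ha hd)
        · exact removed hb (Or.inr rfl) (ne_of_mem_of_not_mem hb hd)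

end Set

namespace IsEdgeCoverH2

variable {C : Set (Finset ℕ)}

theorem infinite (hC : IsEdgeCoverH2 C) : C.Infinite := by
  intro hfin
  refine Set.infinite_univ ((hfin.biUnion fun E _ ↦ E.finite_toSet).subset fun n _ ↦ ?_)
  obtain ⟨E, hE, hnE⟩ := hC.2 n
  exact Set.mem_biUnion hE hnE

theorem insert_union_diff_pair (hC : IsEdgeCoverH2 C) {E : Finset ℕ} (hE : E ∈ C)
    (F : Finset ℕ) : IsEdgeCoverH2 (insert (E ∪ F) (C \ {E, F})) := by
  refine ⟨?_, fun n ↦ ?_⟩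
  · rintro G (rfl | ⟨hG, -⟩)
    · exact (hC.1 E hE).mono Finset.subset_union_left
    · exact hC.1 G hG
  · obtain ⟨G, hG, hnG⟩ := hC.2 n
    by_cases hGEF : G ∈ ({E, F} : Set (Finset ℕ))
    · refine ⟨E ∪ F, Set.mem_insert _ _, ?_⟩
      rcases hGEF with rfl | rfl
      · exact Finset.mem_union_left _ hnG
      · exact Finset.mem_union_right _ hnG
    · exact ⟨G, Set.mem_insert_of_mem _ ⟨hG, hGEF⟩, hnG⟩

end IsEdgeCoverH2

/-- `H₂*` has no strongly minimal edge-cover. -/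
theorem stmt_4 (C : Set (Finset ℕ)) (hC : IsEdgeCoverH2 C) :
    ∃ C' : Set (Finset ℕ), IsEdgeCoverH2 C' ∧ (C \ C').Finite ∧ (C' \ C).Finite ∧
      (C' \ C).ncard < (C \ C').ncard := by
  obtain ⟨E, hE, F, hF, hEF⟩ := hC.infinite.nontrivial
  exact ⟨insert (E ∪ F) (C \ {E, F}), hC.insert_union_diff_pair hE F,
    (Set.toFinite {E, F}).subset (Set.diff_insert_diff_pair_subset C E F _),
    (Set.toFinite {E ∪ F}).subset (Set.insert_diff_pair_diff_subset C E F _),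
    Set.ncard_insert_diff_pair_diff_lt hE hF hEF _⟩
end

section
/- Let G be the graph on vertex set ℕ₊ with edge set {{u, v} : u < v and 2u ≤ v}. Then G has no strongly minimal vertex-cover: for every vertex-cover A there is a vertex-cover A' with |A \ A'| > |A' \ A|. -/
/-!
Two vertices outside a cover `A` span no edge, so any two positive non-members `u ≤ v` satisfy
`v < 2u`. If `A` misses some positive integer, let `x` and `y` be the least and the largest one;
then `y < 2x`, and trading `y + 1, y + 2 ∈ A` for `x` gives a cover again: a surviving edge `{u, v}`
would have `x < u` and `v ≤ y + 2`, whence `2x + 2 ≤ 2u ≤ v ≤ y + 2 < 2x + 2`. If `A` contains every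
positive integer, the vertex `1` can simply be dropped.
-/

/-- A vertex-cover of the graph `G` on the positive integers with edges `{u,v}` for
`u < v` and `2u ≤ v`: a set of positive integers meeting every such edge. -/
def IsCoverG (A : Set ℕ) : Prop :=
  A ⊆ {n | 0 < n} ∧ ∀ u v : ℕ, 0 < u → u < v → 2 * u ≤ v → u ∈ A ∨ v ∈ A

theorem Set.diff_union_diff_of_subset {α : Type*} {A S T : Set α} (hT : T ⊆ A) :
    A \ ((A ∪ S) \ T) = T := by
  rw [Set.sdiff_sdiff_right, Set.sdiff_eq_empty.mpr Set.subset_union_left, Set.empty_union,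
    Set.inter_eq_right.mpr hT]

theorem Set.union_diff_diff_of_disjoint {α : Type*} {A S T : Set α} (hS : Disjoint S A)
    (hT : T ⊆ A) : ((A ∪ S) \ T) \ A = S := by
  rw [sdiff_right_comm, Set.union_sdiff_left, hS.sdiff_eq_left,
    (hS.mono_right hT).sdiff_eq_left]

theorem exists_cover_of_exchange {A S T : Set ℕ} (hS : Disjoint S A) (hT : T ⊆ A)
    (hSf : S.Finite) (hTf : T.Finite) (hST : S.ncard < T.ncard) (hcov : IsCoverG ((A ∪ S) \ T)) :
    ∃ A' : Set ℕ, IsCoverG A' ∧ (A \ A').Finite ∧ (A' \ A).Finite ∧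
      (A' \ A).ncard < (A \ A').ncard := by
  refine ⟨_, hcov, ?_⟩
  rw [Set.diff_union_diff_of_subset hT, Set.union_diff_diff_of_disjoint hS hT]
  exact ⟨hTf, hSf, hST⟩

namespace IsCoverG

variable {A : Set ℕ}

theorem lt_two_mul (hA : IsCoverG A) {u v : ℕ} (hu : 0 < u) (huA : u ∉ A) (hvA : v ∉ A)
    (huv : u ≤ v) : v < 2 * u := by
  by_contra! h
  rcases hA.2 u v hu (by omega) h with h | h
  exacts [huA h, hvA h]

theorem diff_singleton_one (hA : IsCoverG A) (hall : ∀ n, 0 < n → n ∈ A) :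
    IsCoverG (A \ {1}) := by
  refine ⟨Set.sdiff_subset.trans hA.1, fun u v hu huv h2u => Or.inr ⟨hall v (by omega), ?_⟩⟩
  simp only [Set.mem_singleton_iff]
  omega

theorem exchange (hA : IsCoverG A) {x y : ℕ} (hx : 0 < x)
    (hxmin : ∀ n, 0 < n → n ∉ A → x ≤ n) (hymax : ∀ n, 0 < n → n ∉ A → n ≤ y)
    (hxy : x ≤ y) (hyx : y < 2 * x) : IsCoverG ((A ∪ {x}) \ {y + 1, y + 2}) := by
  refine ⟨fun n hn => ?_, fun u v hu huv h2u => ?_⟩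
  · rcases hn.1 with hnA | rfl
    exacts [hA.1 hnA, hx]
  have hxu : u ∉ (A ∪ {x}) \ {y + 1, y + 2} → x < u := fun h => by
    by_cases huA : u ∈ A ∪ {x}
    · have : u = y + 1 ∨ u = y + 2 := not_and_not_right.mp h huA
      omega
    · simp only [Set.mem_union, Set.mem_singleton_iff, not_or, ← ne_eq] at huA
      exact (hxmin u hu huA.1).lt_of_ne' huA.2
  have hvy : v ∉ (A ∪ {x}) \ {y + 1, y + 2} → v ≤ y + 2 := fun h => by
    by_cases hvA : v ∈ A ∪ {x}
    · have : v = y + 1 ∨ v = y + 2 := not_and_not_right.mp h hvA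
      omega
    · exact (hymax v (by omega) (not_or.mp hvA).1).trans (by omega)
  by_contra! h
  have := hxu h.1
  have := hvy h.2
  omega

end IsCoverG

/-- The graph `G` has no strongly minimal vertex-cover. -/
theorem stmt_6 (A : Set ℕ) (hA : IsCoverG A) :
    ∃ A' : Set ℕ, IsCoverG A' ∧ (A \ A').Finite ∧ (A' \ A).Finite ∧
      (A' \ A).ncard < (A \ A').ncard := by
  set C := {n | 0 < n ∧ n ∉ A}
  rcases C.eq_empty_or_nonempty with hC | hC
  · have hall : ∀ n, 0 < n → n ∈ A := fun n hn => of_not_not fun h => hC.subset ⟨hn, h⟩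
    refine exists_cover_of_exchange (S := ∅) (T := {1}) (Set.empty_disjoint A)
      (Set.singleton_subset_iff.mpr (hall 1 one_pos)) Set.finite_empty (Set.finite_singleton 1)
      (by simp only [Set.ncard_empty, Set.ncard_singleton, zero_lt_one]) ?_
    simpa only [Set.union_empty] using hA.diff_singleton_one hall
  · obtain ⟨hx, hxA⟩ : sInf C ∈ C := Nat.sInf_mem hC
    have hbdd : BddAbove C := ⟨2 * sInf C, fun n hn => (hA.lt_two_mul hx hxA hn.2
      (Nat.sInf_le hn)).le⟩
    obtain ⟨hy, hyA⟩ : sSup C ∈ C := Nat.sSup_mem hC hbdd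
    have hxy : sInf C ≤ sSup C := Nat.sInf_le ⟨hy, hyA⟩
    have hymax : ∀ n, 0 < n → n ∉ A → n ≤ sSup C := fun n hn hnA => le_csSup hbdd ⟨hn, hnA⟩
    have hmem : ∀ k, sSup C < k → k ∈ A := fun k hk =>
      of_not_not fun h => (hymax k (by omega) h).not_gt hk
    refine exists_cover_of_exchange (S := {sInf C}) (T := {sSup C + 1, sSup C + 2})
      (Set.disjoint_singleton_left.mpr hxA)
      (Set.insert_subset (hmem _ (by omega)) (Set.singleton_subset_iff.mpr (hmem _ (by omega))))
      (Set.finite_singleton _) (Set.toFinite _)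
      (by rw [Set.ncard_singleton, Set.ncard_pair (by omega)]; omega) ?_
    exact hA.exchange hx (fun n hn hnA => Nat.sInf_le ⟨hn, hnA⟩) hymax hxy
      (hA.lt_two_mul hx hxA hyA hxy)
end

section
/- In the graph G on ℕ₊ with edges {{u,v} : 2u ≤ v}, if A is a vertex-cover with A ≠ ℕ₊, x = min(ℕ₊ \ A), and y = max(ℕ₊ \ A) (which exists), then (A ∪ {x}) \ {y+1, y+2} is also a vertex-cover of G, and it has strictly smaller symmetric-difference deficit: it removes 2 elements while adding 1. -/
theorem mem_of_lt_of_forall_notMem_le {A : Set ℕ} {y z : ℕ}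
    (hymax : ∀ z, 0 < z → z ∉ A → z ≤ y) (hz : y < z) : z ∈ A := by
  by_contra hzA
  have := hymax z (by omega) hzA
  omega

namespace IsCoverG

variable {A : Set ℕ} {x y : ℕ}

theorem mono {B : Set ℕ} (hA : IsCoverG A) (hAB : A ⊆ B) (hB : B ⊆ {n | 0 < n}) :
    IsCoverG B :=
  ⟨hB, fun u v hu huv h2u => (hA.2 u v hu huv h2u).imp (@hAB u) (@hAB v)⟩

theorem union_singleton_subset_pos (hA : IsCoverG A) (hx : 0 < x) :
    A ∪ {x} ⊆ {n | 0 < n} :=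
  Set.union_subset hA.1 (Set.singleton_subset_iff.2 hx)

theorem lt_two_mul_of_notMem (hA : IsCoverG A) (hx : 0 < x) (hxA : x ∉ A) (hyA : y ∉ A) :
    y < 2 * x := by
  by_contra! h
  rcases hA.2 x y hx (by omega) h with hxA' | hyA'
  exacts [hxA hxA', hyA hyA']

theorem union_singleton_diff_Ioc (hA : IsCoverG A) (hx : 0 < x) (hxA : x ∉ A)
    (hxmin : ∀ z, 0 < z → z ∉ A → x ≤ z) (hymax : ∀ z, 0 < z → z ∉ A → z ≤ y) :
    IsCoverG ((A ∪ {x}) \ Set.Ioc y (2 * x + 1)) := by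
  have hxy : x ≤ y := hymax x hx hxA
  have hmem_of_large : ∀ v ∈ A, 2 * x + 1 < v → v ∈ (A ∪ {x}) \ Set.Ioc y (2 * x + 1) :=
    fun v hvA hv => ⟨Or.inl hvA, fun hvI => absurd hvI.2 (by omega)⟩
  refine ⟨Set.sdiff_subset.trans (hA.union_singleton_subset_pos hx), ?_⟩
  intro u v hu huv h2u
  rcases le_or_gt u y with huy | hyu
  · by_cases hux : u ∈ A ∪ {x}
    · exact Or.inl ⟨hux, fun huI => absurd huI.1 (by omega)⟩
    · have hxu : x < u := by
        simp only [Set.mem_union, Set.mem_singleton_iff, not_or] at hux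
        exact lt_of_le_of_ne (hxmin u hu hux.1) (Ne.symm hux.2)
      have hvA : v ∈ A := (hA.2 u v hu huv h2u).resolve_left fun huA => hux (Or.inl huA)
      exact Or.inr (hmem_of_large v hvA (by omega))
  · exact Or.inr (hmem_of_large v (mem_of_lt_of_forall_notMem_le hymax (by omega)) (by omega))

end IsCoverG

theorem stmt_7_general (A : Set ℕ) (hA : IsCoverG A) (x y : ℕ)
    (hx : 0 < x) (hxA : x ∉ A) (hxmin : ∀ z, 0 < z → z ∉ A → x ≤ z)
    (hyA : y ∉ A) (hymax : ∀ z, 0 < z → z ∉ A → z ≤ y) :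
    IsCoverG ((A ∪ {x}) \ {y + 1, y + 2}) ∧
      (A \ ((A ∪ {x}) \ {y + 1, y + 2})).ncard = 2 ∧
      (((A ∪ {x}) \ {y + 1, y + 2}) \ A).ncard = 1 := by
  have hxy : x ≤ y := hymax x hx hxA
  have hy2x : y < 2 * x := hA.lt_two_mul_of_notMem hx hxA hyA
  have hpair_sub : {y + 1, y + 2} ⊆ A := Set.pair_subset
    (mem_of_lt_of_forall_notMem_le hymax (by omega))
    (mem_of_lt_of_forall_notMem_le hymax (by omega))
  have hremoved : A \ ((A ∪ {x}) \ {y + 1, y + 2}) = {y + 1, y + 2} := by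
    rw [Set.sdiff_sdiff_right, Set.sdiff_eq_empty.2 Set.subset_union_left, Set.empty_union,
      Set.inter_eq_right.2 hpair_sub]
  have hadded : ((A ∪ {x}) \ {y + 1, y + 2}) \ A = {x} := by
    ext n
    simp only [Set.mem_sdiff, Set.mem_union, Set.mem_singleton_iff, Set.mem_insert_iff]
    grind
  refine ⟨?_, by rw [hremoved, Set.ncard_pair (by omega)], by rw [hadded, Set.ncard_singleton]⟩
  refine (hA.union_singleton_diff_Ioc hx hxA hxmin hymax).mono
    (Set.sdiff_subset_sdiff_right ?_) (Set.sdiff_subset.trans (hA.union_singleton_subset_pos hx))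
  rintro z (rfl | rfl) <;> simp only [Set.mem_Ioc] <;> omega

/-- If `A ≠ ℕ₊` is a vertex-cover of `G`, `x` the least and `y` the greatest positive
integer not in `A`, then `(A ∪ {x}) \ {y+1, y+2}` is again a vertex-cover; it removes
two elements from `A` while adding one. -/
theorem stmt_7 (A : Set ℕ) (hA : IsCoverG A) (x y : ℕ)
    (hx : 0 < x) (hxA : x ∉ A) (hxmin : ∀ z, 0 < z → z ∉ A → x ≤ z)
    (hy : 0 < y) (hyA : y ∉ A) (hymax : ∀ z, 0 < z → z ∉ A → z ≤ y) :
    IsCoverG ((A ∪ {x}) \ {y + 1, y + 2}) ∧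
      (A \ ((A ∪ {x}) \ {y + 1, y + 2})).ncard = 2 ∧
      (((A ∪ {x}) \ {y + 1, y + 2}) \ A).ncard = 1 :=
  stmt_7_general A hA x y hx hxA hxmin hyA hymax
end

section
/- Let e = {v₁, …, v_k} be a set of k ≥ 2 vertices, and let G_e be the gadget hypergraph with vertex set e ∪ {v_i⁺ : 1 ≤ i ≤ k−1} ∪ {v_i⁻ : 2 ≤ i ≤ k} (all new vertices distinct) and edges: the k−1 inner edges {v_i⁺, v_{i+1}⁻} for 1 ≤ i ≤ k−1, and the k outer edges {v₁, v₁⁺}, {v_k, v_k⁻}, and {v_i, v_i⁻, v_i⁺} for 2 ≤ i ≤ k−1. Then the set of all k outer edges is a matching of G_e, and it is the unique matching of G_e of size ≥ k. -/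
/-- Vertices of the gadget: `vO i` are the original vertices `vᵢ` of the edge `e`,
`vP i` are the added vertices `vᵢ⁺`, `vM i` are the added vertices `vᵢ⁻`. -/
abbrev GVert := ℕ ⊕ (ℕ ⊕ ℕ)

def vO (i : ℕ) : GVert := Sum.inl i
def vP (i : ℕ) : GVert := Sum.inr (Sum.inl i)
def vM (i : ℕ) : GVert := Sum.inr (Sum.inr i)

/-- The inner edge `{vᵢ⁺, vᵢ₊₁⁻}`. -/
def innerE (i : ℕ) : Finset GVert := {vP i, vM (i + 1)}

/-- The outer edges: `{v₁, v₁⁺}`, `{v_k, v_k⁻}`, and `{vᵢ, vᵢ⁻, vᵢ⁺}` for `2 ≤ i ≤ k-1`. -/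
def outerE (k i : ℕ) : Finset GVert :=
  if i = 1 then {vO 1, vP 1} else if i = k then {vO k, vM k} else {vO i, vM i, vP i}

/-- The set of the `k-1` inner edges of the gadget. -/
def Inners (k : ℕ) : Set (Finset GVert) := {e | ∃ i, 1 ≤ i ∧ i ≤ k - 1 ∧ e = innerE i}

/-- The set of the `k` outer edges of the gadget. -/
def Outers (k : ℕ) : Set (Finset GVert) := {e | ∃ i, 1 ≤ i ∧ i ≤ k ∧ e = outerE k i}

/-- The edge set of the gadget `G_e` on an edge of size `k`. -/
def GadgetEdges (k : ℕ) : Set (Finset GVert) := Inners k ∪ Outers k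

/-- A matching of the gadget: a set of pairwise disjoint edges of `G_e`. -/
def IsGadgetMatching (k : ℕ) (M : Set (Finset GVert)) : Prop :=
  M ⊆ GadgetEdges k ∧ M.Pairwise fun a b => Disjoint a b

/-!
Index every edge of the gadget by the largest `i` such that it contains `vᵢ` or `vᵢ⁺`: the inner edge
`{vᵢ⁺, vᵢ₊₁⁻}` and the outer edge through `vᵢ` both get index `i ∈ [1, k]`, and two edges of
the same index always meet (in `vᵢ⁺`). So a matching injects into `[1, k]`, and one with
`k` edges has an edge of every index. Going down from `i = k`, the edge of index `k` must be
outer, and if the outer edge of index `i + 1` is in the matching, the edge of index `i` cannot be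
the inner one, which meets it in `vᵢ₊₁⁻`. Hence all outer edges are in the matching, and no
inner edge fits beside them.
-/

/-- `vᵢ⁻` gets index `0`, so the inner edge `{vᵢ⁺, vᵢ₊₁⁻}` has index `i`, not `i + 1`. -/
def vertexIndex : GVert → ℕ
  | Sum.inl i => i
  | Sum.inr (Sum.inl i) => i
  | Sum.inr (Sum.inr _) => 0

def edgeIndex (e : Finset GVert) : ℕ := e.sup vertexIndex

@[simp]
lemma edgeIndex_innerE (i : ℕ) : edgeIndex (innerE i) = i := by
  simp [edgeIndex, innerE, vP, vM, vertexIndex]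

@[simp]
lemma edgeIndex_outerE (k i : ℕ) : edgeIndex (outerE k i) = i := by
  unfold outerE
  split_ifs with h1 hk
  · simp [h1, edgeIndex, vO, vP, vertexIndex]
  · simp [hk, edgeIndex, vO, vM, vertexIndex]
  · simp [edgeIndex, vO, vM, vP, vertexIndex]

lemma outerE_subset (k i : ℕ) : outerE k i ⊆ {vO i, vM i, vP i} := by
  unfold outerE
  split_ifs with h1 hk
  · subst h1; exact Finset.insert_subset_insert _ (by simp)
  · subst hk; exact Finset.insert_subset_insert _ (by simp)
  · exact subset_rfl

lemma vO_mem_outerE (k i : ℕ) : vO i ∈ outerE k i := by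
  unfold outerE
  split_ifs <;> simp [*]

lemma vP_mem_outerE {k i : ℕ} (hi : i ≠ k) : vP i ∈ outerE k i := by
  unfold outerE
  split_ifs <;> simp_all

lemma vM_mem_outerE (k : ℕ) {i : ℕ} (hi : i ≠ 1) : vM i ∈ outerE k i := by
  unfold outerE
  split_ifs <;> simp_all

lemma disjoint_outerE (k : ℕ) {i j : ℕ} (h : i ≠ j) : Disjoint (outerE k i) (outerE k j) := by
  refine Finset.disjoint_left.2 fun x hxi hxj => ?_
  have hi := outerE_subset k i hxi
  have hj := outerE_subset k j hxj
  simp only [Finset.mem_insert, Finset.mem_singleton] at hi hj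
  rcases hi with rfl | rfl | rfl <;> rcases hj with hj | hj | hj <;>
    simp_all [vO, vM, vP]

lemma outerE_injective (k : ℕ) : Function.Injective (outerE k) := by
  intro i j h
  have := outerE_subset k j (h ▸ vO_mem_outerE k i)
  simpa [vO, vM, vP] using this

lemma innerE_ne_outerE (k i j : ℕ) : innerE i ≠ outerE k j := by
  intro h
  have := h ▸ vO_mem_outerE k j
  simp [innerE, vO, vP, vM] at this

lemma not_disjoint_innerE_outerE {k i : ℕ} (hi : i ≠ k) :
    ¬ Disjoint (innerE i) (outerE k i) :=
  Finset.not_disjoint_iff.2 ⟨vP i, by simp [innerE], vP_mem_outerE hi⟩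

lemma not_disjoint_innerE_outerE_succ (k : ℕ) {i : ℕ} (hi : i ≠ 0) :
    ¬ Disjoint (innerE i) (outerE k (i + 1)) :=
  Finset.not_disjoint_iff.2 ⟨vM (i + 1), by simp [innerE], vM_mem_outerE k (by omega)⟩

lemma edgeIndex_mem_Icc {k : ℕ} {e : Finset GVert} (he : e ∈ GadgetEdges k) :
    edgeIndex e ∈ Set.Icc 1 k := by
  rcases he with ⟨i, hi1, hik, rfl⟩ | ⟨i, hi1, hik, rfl⟩ <;> simp only [edgeIndex_innerE,
    edgeIndex_outerE, Set.mem_Icc] <;> omega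

lemma not_disjoint_of_edgeIndex_eq {k : ℕ} {e f : Finset GVert} (he : e ∈ GadgetEdges k)
    (hf : f ∈ GadgetEdges k) (h : edgeIndex e = edgeIndex f) : ¬ Disjoint e f := by
  rcases he with ⟨i, hi1, hik, rfl⟩ | ⟨i, -, -, rfl⟩ <;>
    rcases hf with ⟨j, hj1, hjk, rfl⟩ | ⟨j, -, -, rfl⟩ <;>
    simp only [edgeIndex_innerE, edgeIndex_outerE] at h <;> subst h
  · simp [innerE]
  · exact not_disjoint_innerE_outerE (by omega)
  · exact fun hd => not_disjoint_innerE_outerE (by omega) hd.symm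
  · exact Finset.not_disjoint_iff.2 ⟨vO i, vO_mem_outerE k i, vO_mem_outerE k i⟩

lemma isGadgetMatching_outers (k : ℕ) : IsGadgetMatching k (Outers k) := by
  refine ⟨Set.subset_union_right, ?_⟩
  rintro _ ⟨i, -, -, rfl⟩ _ ⟨j, -, -, rfl⟩ hne
  exact disjoint_outerE k fun h => hne (h ▸ rfl)

lemma outers_eq_image (k : ℕ) : Outers k = outerE k '' Set.Icc 1 k := by
  ext e
  simp only [Outers, Set.mem_image, Set.mem_Icc]
  exact ⟨fun ⟨i, h1, h2, he⟩ => ⟨i, ⟨h1, h2⟩, he.symm⟩,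
    fun ⟨i, ⟨h1, h2⟩, he⟩ => ⟨i, h1, h2, he.symm⟩⟩

lemma ncard_outers (k : ℕ) : (Outers k).ncard = k := by
  rw [outers_eq_image, Set.ncard_image_of_injective _ (outerE_injective k), Set.ncard_Icc_nat]
  omega

namespace IsGadgetMatching

variable {k : ℕ} {M : Set (Finset GVert)}

lemma injOn_edgeIndex (hM : IsGadgetMatching k M) : Set.InjOn edgeIndex M := by
  intro e he f hf h
  by_contra hne
  exact not_disjoint_of_edgeIndex_eq (hM.1 he) (hM.1 hf) h (hM.2 he hf hne)

lemma surjOn_edgeIndex (hM : IsGadgetMatching k M) (hcard : k ≤ M.ncard) :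
    Set.SurjOn edgeIndex M (Set.Icc 1 k) := by
  have hsub : edgeIndex '' M ⊆ Set.Icc 1 k := by
    rintro _ ⟨e, he, rfl⟩
    exact edgeIndex_mem_Icc (hM.1 he)
  refine (Set.eq_of_subset_of_ncard_le hsub ?_ (Set.finite_Icc 1 k)).symm.subset
  rw [hM.injOn_edgeIndex.ncard_image, Set.ncard_Icc_nat]
  omega

lemma outerE_mem (hM : IsGadgetMatching k M) (hcard : k ≤ M.ncard) {i : ℕ} (hi1 : 1 ≤ i)
    (hik : i ≤ k) : outerE k i ∈ M := by
  have hedge : ∀ j ∈ Set.Icc 1 k, (j ≤ k - 1 ∧ innerE j ∈ M) ∨ outerE k j ∈ M := by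
    intro j hj
    obtain ⟨e, he, rfl⟩ := hM.surjOn_edgeIndex hcard hj
    rcases hM.1 he with ⟨i, -, hik, rfl⟩ | ⟨i, -, -, rfl⟩
    · exact Or.inl ⟨by simpa using hik, by simpa using he⟩
    · exact Or.inr (by simpa using he)
  refine Nat.decreasingInduction' (P := fun i => outerE k i ∈ M) (fun j hjk hij hsucc => ?_) hik ?_
  · refine (hedge j ⟨by omega, hjk.le⟩).resolve_left fun ⟨_, hin⟩ => ?_
    exact not_disjoint_innerE_outerE_succ k (by omega)
      (hM.2 hin hsucc (innerE_ne_outerE k j (j + 1)))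
  · exact (hedge k ⟨by omega, le_rfl⟩).resolve_left fun ⟨hk, _⟩ => by omega

lemma outers_subset (hM : IsGadgetMatching k M) (hcard : k ≤ M.ncard) : Outers k ⊆ M := by
  rintro _ ⟨i, hi1, hik, rfl⟩
  exact hM.outerE_mem hcard hi1 hik

lemma subset_outers (hM : IsGadgetMatching k M) (hO : Outers k ⊆ M) : M ⊆ Outers k := by
  intro e he
  rcases hM.1 he with ⟨i, hi1, hik, rfl⟩ | hout
  · exact absurd (hM.2 he (hO ⟨i, hi1, by omega, rfl⟩) (innerE_ne_outerE k i i))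
      (not_disjoint_innerE_outerE (by omega))
  · exact hout

end IsGadgetMatching

theorem stmt_8_general (k : ℕ) :
    IsGadgetMatching k (Outers k) ∧ (Outers k).ncard = k ∧
      ∀ M : Set (Finset GVert), IsGadgetMatching k M → k ≤ M.ncard → M = Outers k := by
  refine ⟨isGadgetMatching_outers k, ncard_outers k, fun M hM hcard => ?_⟩
  have hO := hM.outers_subset hcard
  exact (hM.subset_outers hO).antisymm hO

/-- The `k` outer edges form a matching of the gadget `G_e`, and this is the unique
matching of `G_e` of size at least `k`. -/
theorem stmt_8 (k : ℕ) (hk : 2 ≤ k) :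
    IsGadgetMatching k (Outers k) ∧ (Outers k).ncard = k ∧
      ∀ M : Set (Finset GVert), IsGadgetMatching k M → k ≤ M.ncard → M = Outers k :=
  stmt_8_general k
end

section
/- Let H be a hypergraph with edges of size 2 or 3, such that some vertex of H lies only in edges of size 2. Construct H' by adding a single new vertex v and replacing every edge e of size 2 by e ∪ {v}, with induced bijection φ : E(H) → E(H'). Then for any C ⊆ E(H), φ[C] is an edge-cover of H' if and only if C is an edge-cover of H; consequently H has a strongly minimal edge-cover if and only if H' does. -/
/-- The map replacing each edge `e` of size `2` by `e ∪ {v}` for a single new vertex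
`v` (modelled as `none : Option V`), leaving edges of size `3` unchanged. -/
def phi2 {V : Type*} [DecidableEq V] (e : Finset V) : Finset (Option V) :=
  if e.card = 2 then insert none (e.image some) else e.image some

/-- `C` is an edge-cover of the hypergraph with vertex type `α` and edge set `E`. -/
def IsCover {α : Type*} (E C : Set (Finset α)) : Prop :=
  C ⊆ E ∧ ∀ v : α, ∃ e ∈ C, v ∈ e

/-- `C` is a strongly minimal edge-cover of the hypergraph with edge set `E`. -/
def StrMinCover {α : Type*} (E C : Set (Finset α)) : Prop :=
  IsCover E C ∧ ∀ D : Set (Finset α), IsCover E D →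
    Cardinal.mk ↥(C \ D) ≤ Cardinal.mk ↥(D \ C)

/-!
Vertices of `H` are the `some v`, and `φ` puts `some v` in `φ e` exactly when `v ∈ e`, so
`φ[C]` covers the old vertices iff `C` covers `H`. The new vertex `none` lies in `φ e` exactly
when `e` is a `2`-edge; the edge of `C` covering the vertex `w` of `H` that lies only in
`2`-edges is such an edge, so `none` is covered as soon as `C` covers `H`. Since `φ` is injective
and every subset of `E(H')` is the image of a subset of `E(H)`, the cover correspondence
transports the defining inequality of strongly minimal covers in both directions.
-/

open Function

universe u

theorem Cardinal.mk_image_diff_image {α β : Type u} {f : α → β} (hf : Injective f) (s t : Set α) :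
    Cardinal.mk ↥(f '' s \ f '' t) = Cardinal.mk ↥(s \ t) := by
  rw [← Set.image_sdiff hf, Cardinal.mk_image_eq hf]

section StrMinCover

variable {α β : Type u} {f : Finset α → Finset β} {E : Set (Finset α)}

theorem strMinCover_image_iff (hf : Injective f)
    (hcov : ∀ C ⊆ E, IsCover E C ↔ IsCover (f '' E) (f '' C)) {C : Set (Finset α)}
    (hC : C ⊆ E) : StrMinCover (f '' E) (f '' C) ↔ StrMinCover E C := by
  unfold StrMinCover
  rw [← hcov C hC]
  refine and_congr_right fun _ => ⟨fun h D hD => ?_, fun h D' hD' => ?_⟩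
  · simpa only [Cardinal.mk_image_diff_image hf] using h (f '' D) ((hcov D hD.1).1 hD)
  · obtain ⟨D, hDE, rfl⟩ := Set.subset_image_iff.1 hD'.1
    simpa only [Cardinal.mk_image_diff_image hf] using h D ((hcov D hDE).2 hD')

theorem exists_strMinCover_image_iff (hf : Injective f)
    (hcov : ∀ C ⊆ E, IsCover E C ↔ IsCover (f '' E) (f '' C)) :
    (∃ C, StrMinCover E C) ↔ ∃ C', StrMinCover (f '' E) C' := by
  constructor
  · rintro ⟨C, hC⟩
    exact ⟨f '' C, (strMinCover_image_iff hf hcov hC.1.1).2 hC⟩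
  · rintro ⟨C', hC'⟩
    obtain ⟨C, hCE, rfl⟩ := Set.subset_image_iff.1 hC'.1.1
    exact ⟨C, (strMinCover_image_iff hf hcov hCE).1 hC'⟩

end StrMinCover

section Phi2

variable {V : Type*} [DecidableEq V]

@[simp]
theorem some_mem_phi2 {v : V} {e : Finset V} : some v ∈ phi2 e ↔ v ∈ e := by
  unfold phi2; split <;> simp

theorem none_mem_phi2 {e : Finset V} (he : e.card = 2) : none ∈ phi2 e := by
  simp [phi2, he]

theorem phi2_injective : Injective (phi2 (V := V)) := fun a b h => by
  ext x
  rw [← some_mem_phi2, h, some_mem_phi2]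

theorem card_phi2 {e : Finset V} (he : e.card = 2 ∨ e.card = 3) : (phi2 e).card = 3 := by
  have himg : (e.image some).card = e.card :=
    Finset.card_image_of_injective _ (Option.some_injective V)
  rcases he with h2 | h3
  · simp [phi2, h2, Finset.card_insert_of_notMem, himg]
  · simp [phi2, h3, himg]

theorem isCover_iff_isCover_phi2_image {E C : Set (Finset V)} (hC : C ⊆ E)
    {w : V} (hw : ∀ e ∈ E, w ∈ e → e.card = 2) :
    IsCover E C ↔ IsCover (phi2 '' E) (phi2 '' C) := by
  constructor
  · rintro ⟨-, hcov⟩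
    refine ⟨Set.image_mono hC, ?_⟩
    rintro (_ | v)
    · obtain ⟨e, heC, hwe⟩ := hcov w
      exact ⟨phi2 e, Set.mem_image_of_mem _ heC, none_mem_phi2 (hw e (hC heC) hwe)⟩
    · obtain ⟨e, heC, hve⟩ := hcov v
      exact ⟨phi2 e, Set.mem_image_of_mem _ heC, some_mem_phi2.2 hve⟩
  · rintro ⟨-, hcov⟩
    refine ⟨hC, fun v => ?_⟩
    obtain ⟨-, ⟨e, heC, rfl⟩, hve⟩ := hcov (some v)
    exact ⟨e, heC, some_mem_phi2.1 hve⟩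

end Phi2

/-- If every edge of `H` has size `2` or `3` and some vertex lies only in edges of
size `2`, then the induced map `φ` to the `3`-uniform hypergraph `H'` (obtained by
adding a single new vertex to every `2`-edge) preserves edge-covers in both
directions; consequently `H` has a strongly minimal edge-cover iff `H'` does. -/
theorem stmt_12 {V : Type*} [DecidableEq V] (E : Set (Finset V))
    (hE : ∀ e ∈ E, e.card = 2 ∨ e.card = 3)
    (hw : ∃ w : V, ∀ e ∈ E, w ∈ e → e.card = 2) :
    (∀ e ∈ E, (phi2 e).card = 3) ∧
    (∀ C ⊆ E, (IsCover E C ↔ IsCover (phi2 '' E) (phi2 '' C))) ∧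
    ((∃ C, StrMinCover E C) ↔ ∃ C', StrMinCover (phi2 '' E) C') := by
  obtain ⟨w, hw⟩ := hw
  have hcov : ∀ C ⊆ E, IsCover E C ↔ IsCover (phi2 '' E) (phi2 '' C) :=
    fun C hC => isCover_iff_isCover_phi2_image hC hw
  exact ⟨fun e he => card_phi2 (hE e he), hcov, exists_strMinCover_image_iff phi2_injective hcov⟩
end
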